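/- Let (f_n) be a sequence of monotone non-expansive maps on a 0-box X ⊆ ℝ_{≥0}^d converging pointwise to a Picard operator f : X → X. Then lim_{n→∞} μ(sup_{k≥n} f_k) = μf, where μ denotes the least fixpoint. -/

import Mathlib

open Filter

/-- The 0-box `{x ∈ ℝ≥0^d | x ≤ x*}` for `x* ∈ [0,∞]^d`. -/
def zeroBox (d : ℕ) (xstar : Fin d → ENNReal) : Set (Fin d → ℝ) :=
  {x | ∀ i, 0 ≤ x i ∧ ENNReal.ofReal (x i) ≤ xstar i}

/-- The ω-continuous extension of `f : X → X` to `[0,∞]^d`: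
`f̄(x) = sup { f(y) | y ∈ X, y ≤ x }`. -/
noncomputable def extendF (d : ℕ) (xstar : Fin d → ENNReal)
    (f : (Fin d → ℝ) → Fin d → ℝ) : (Fin d → ENNReal) → Fin d → ENNReal :=
  fun x i =>
    ⨆ y : {y : Fin d → ℝ // y ∈ zeroBox d xstar ∧ ∀ j, ENNReal.ofReal (y j) ≤ x j},
      ENNReal.ofReal (f y.1 i)

/-- The least fixpoint of a (monotone) map on `[0,∞]^d` (Knaster–Tarski). -/
noncomputable def lfpF (d : ℕ) (F : (Fin d → ENNReal) → Fin d → ENNReal) :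
    Fin d → ENNReal :=
  sInf {x : Fin d → ENNReal | F x ≤ x}

/-!
Every prefixpoint of the extension `f̄` dominates the iterates `f^m 0`, so `μ f̄ = μ` by the
Picard property, and since `f̄` lies below every tail-supremum operator, `μ` bounds their least
fixpoints from below.

For the upper bound clamp `μ + ε` into the box to get `v`. Some iterate `f^M v` is within `ε / 2`
of `μ`, and for large `n` the non-expansive map `g = sup_{k ≥ n} f_k` is within `ε / (2M)` of `f`
along the finite orbit `v, …, f^(M-1) v`; hence `g^M v` is within `ε` of `μ`, so `g^M v ≤ v`.
The minimum of `v, g v, …, g^(M-1) v` is then a prefixpoint of `g`, hence of every `f_k` with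
`k ≥ n`, and it lies below `μ + ε`.
-/

open Set Topology

theorem exists_prefixpoint_le_of_iterate_le {α : Type*} [SemilatticeInf α] {S : Set α}
    (hS : ∀ x ∈ S, ∀ y ∈ S, x ⊓ y ∈ S) {g : α → α} (hmaps : MapsTo g S S)
    (hmono : MonotoneOn g S) {v : α} (hv : v ∈ S) {M : ℕ} (hM : 0 < M)
    (hvM : g^[M] v ≤ v) : ∃ p ∈ S, g p ≤ p ∧ p ≤ v := by
  have hne : (Finset.range M).Nonempty := Finset.nonempty_range_iff.2 hM.ne'
  set p := (Finset.range M).inf' hne fun r => g^[r] v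
  have horbit : ∀ r, g^[r] v ∈ S := fun r => hmaps.iterate r hv
  have hpS : p ∈ S := Finset.inf'_mem S hS _ hne _ fun r _ => horbit r
  have hgp : ∀ r < M, g p ≤ g^[r + 1] v := fun r hr => by
    rw [Function.iterate_succ_apply']
    exact hmono hpS (horbit r) (Finset.inf'_le _ (Finset.mem_range.2 hr))
  refine ⟨p, hpS, Finset.le_inf' hne _ fun r hr => ?_, Finset.inf'_le _ (Finset.mem_range.2 hM)⟩
  rcases r with _ | r
  · obtain ⟨m, rfl⟩ := Nat.exists_eq_succ_of_ne_zero hM.ne'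
    exact (hgp m m.lt_succ_self).trans hvM
  · exact hgp r (Nat.lt_of_succ_lt (Finset.mem_range.1 hr))

theorem dist_iterate_le_of_dist_le {X : Type*} [PseudoMetricSpace X] {S : Set X} {f g : X → X}
    (hf : MapsTo f S S) (hg : MapsTo g S S)
    (hg1 : ∀ x ∈ S, ∀ y ∈ S, dist (g x) (g y) ≤ dist x y) {v : X} (hv : v ∈ S) {η : ℝ} {M : ℕ}
    (hη : ∀ j < M, dist (g (f^[j] v)) (f (f^[j] v)) ≤ η) :
    ∀ j ≤ M, dist (g^[j] v) (f^[j] v) ≤ j * η := by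
  intro j hj
  induction j with
  | zero => simp
  | succ j ih =>
    rw [Function.iterate_succ_apply', Function.iterate_succ_apply']
    calc dist (g (g^[j] v)) (f (f^[j] v))
        ≤ dist (g (g^[j] v)) (g (f^[j] v)) + dist (g (f^[j] v)) (f (f^[j] v)) :=
          dist_triangle _ _ _
      _ ≤ j * η + η :=
          add_le_add ((hg1 _ (hg.iterate j hv) _ (hf.iterate j hv)).trans (ih (by omega)))
            (hη j (by omega))
      _ = (j + 1 : ℕ) * η := by push_cast; ring

instance (n : ℕ) : Nonempty {k : ℕ // n ≤ k} := ⟨⟨n, le_rfl⟩⟩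

lemma BddAbove.range_tail {α : Type*} [ConditionallyCompleteLattice α] {u : ℕ → α} (hu : BddAbove (range u)) (n : ℕ) :
    BddAbove (range fun k : {k : ℕ // n ≤ k} => u k) :=
  hu.mono (range_subset_iff.2 fun k => mem_range_self k.1)

lemma le_ciSup_tail {α : Type*} [ConditionallyCompleteLattice α] {u : ℕ → α} (hu : BddAbove (range u)) {n k : ℕ} (hk : n ≤ k) :
    u k ≤ ⨆ k : {k : ℕ // n ≤ k}, u k :=
  le_ciSup (hu.range_tail n) ⟨k, hk⟩

theorem tendsto_ciSup_tail {α : Type*} [ConditionallyCompleteLinearOrder α] [TopologicalSpace α]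
    [OrderTopology α] [DenselyOrdered α] {u : ℕ → α} {a : α} (hu : Tendsto u atTop (𝓝 a)) :
    Tendsto (fun n => ⨆ k : {k : ℕ // n ≤ k}, u k) atTop (𝓝 a) := by
  refine tendsto_order.2 ⟨fun b hb => Eventually.of_forall fun n => ?_, fun b hb => ?_⟩
  · obtain ⟨N, hN⟩ := (hu.eventually (lt_mem_nhds hb)).exists_forall_of_atTop
    exact (hN _ (le_max_right n N)).trans_le (le_ciSup_tail hu.bddAbove_range (le_max_left n N))
  · obtain ⟨c, hac, hcb⟩ := exists_between hb
    obtain ⟨N, hN⟩ := (hu.eventually (gt_mem_nhds hac)).exists_forall_of_atTop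
    exact eventually_atTop.2 ⟨N, fun n hn =>
      (ciSup_le fun k : {k : ℕ // n ≤ k} => (hN k.1 (hn.trans k.2)).le).trans_lt hcb⟩

lemma Real.dist_ciSup_ciSup_le {ι : Sort*} [Nonempty ι] {a b : ι → ℝ} (ha : BddAbove (range a))
    (hb : BddAbove (range b)) {c : ℝ} (h : ∀ k, dist (a k) (b k) ≤ c) :
    dist (⨆ k, a k) (⨆ k, b k) ≤ c := by
  have h' : ∀ k, a k ≤ b k + c ∧ b k ≤ a k + c := fun k => by
    have := abs_sub_le_iff.1 ((Real.dist_eq _ _).symm.trans_le (h k))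
    constructor <;> linarith
  rw [Real.dist_eq, abs_sub_le_iff, sub_le_iff_le_add', sub_le_iff_le_add']
  exact ⟨ciSup_le fun k => (h' k).1.trans (add_le_add (le_ciSup hb k) le_rfl),
    ciSup_le fun k => (h' k).2.trans (add_le_add (le_ciSup ha k) le_rfl)⟩

section ZeroBox

variable {d : ℕ} {xstar : Fin d → ENNReal}

lemma zero_mem_zeroBox : (0 : Fin d → ℝ) ∈ zeroBox d xstar := fun i => by simp

lemma inf_mem_zeroBox {x y : Fin d → ℝ} (hx : x ∈ zeroBox d xstar) (hy : y ∈ zeroBox d xstar) :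
    x ⊓ y ∈ zeroBox d xstar := fun i =>
  ⟨le_min (hx i).1 (hy i).1, (ENNReal.ofReal_le_ofReal (min_le_left _ _)).trans (hx i).2⟩

noncomputable def boxClamp (xstar : Fin d → ENNReal) (u : Fin d → ℝ) : Fin d → ℝ :=
  fun i => (min (ENNReal.ofReal (u i)) (xstar i)).toReal

lemma min_ofReal_ne_top (u : Fin d → ℝ) (i : Fin d) : min (ENNReal.ofReal (u i)) (xstar i) ≠ ⊤ :=
  ne_top_of_le_ne_top ENNReal.ofReal_ne_top (min_le_left _ _)

lemma boxClamp_mem (u : Fin d → ℝ) : boxClamp xstar u ∈ zeroBox d xstar := fun i =>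
  ⟨ENNReal.toReal_nonneg, by
    rw [boxClamp, ENNReal.ofReal_toReal (min_ofReal_ne_top u i)]; exact min_le_right _ _⟩

lemma boxClamp_le {u : Fin d → ℝ} (hu : 0 ≤ u) : boxClamp xstar u ≤ u := fun i =>
  ENNReal.toReal_le_of_le_ofReal (hu i) (min_le_left _ _)

lemma le_boxClamp {u y : Fin d → ℝ} (hy : y ∈ zeroBox d xstar) (hyu : y ≤ u) :
    y ≤ boxClamp xstar u := fun i =>
  (ENNReal.ofReal_le_iff_le_toReal (min_ofReal_ne_top u i)).1
    (le_min (ENNReal.ofReal_le_ofReal (hyu i)) (hy i).2)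

end ZeroBox

noncomputable def tailSup {α ι : Type*} (fn : ℕ → α → ι → ℝ) (n : ℕ) (z : α) : ι → ℝ :=
  fun i => ⨆ k : {k : ℕ // n ≤ k}, fn k z i

section TailSup

variable {d : ℕ} {xstar : Fin d → ENNReal} {fn : ℕ → (Fin d → ℝ) → Fin d → ℝ}
  {f : (Fin d → ℝ) → Fin d → ℝ}
  (hconv : ∀ x ∈ zeroBox d xstar, Tendsto (fun n => fn n x) atTop (𝓝 (f x)))
include hconv

lemma bddAbove_range_apply {z : Fin d → ℝ} (hz : z ∈ zeroBox d xstar) (i : Fin d) :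
    BddAbove (range fun k => fn k z i) :=
  (tendsto_pi_nhds.1 (hconv z hz) i).bddAbove_range

lemma le_tailSup {z : Fin d → ℝ} (hz : z ∈ zeroBox d xstar) {n k : ℕ} (hk : n ≤ k) :
    fn k z ≤ tailSup fn n z := fun i =>
  le_ciSup_tail (bddAbove_range_apply hconv hz i) hk

lemma tendsto_tailSup {z : Fin d → ℝ} (hz : z ∈ zeroBox d xstar) :
    Tendsto (fun n => tailSup fn n z) atTop (𝓝 (f z)) :=
  tendsto_pi_nhds.2 fun i => tendsto_ciSup_tail (tendsto_pi_nhds.1 (hconv z hz) i)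

lemma mapsTo_tailSup (hfnmaps : ∀ n, MapsTo (fn n) (zeroBox d xstar) (zeroBox d xstar)) (n : ℕ) :
    MapsTo (tailSup fn n) (zeroBox d xstar) (zeroBox d xstar) := fun z hz i => by
  refine ⟨(hfnmaps n hz i).1.trans (le_tailSup hconv hz le_rfl i), ?_⟩
  rw [tailSup, ENNReal.ofReal_mono.map_ciSup_of_continuousAt
    ENNReal.continuous_ofReal.continuousAt ((bddAbove_range_apply hconv hz i).range_tail n)]
  exact iSup_le fun k => (hfnmaps k hz i).2

lemma monotoneOn_tailSup (hfnmono : ∀ n, MonotoneOn (fn n) (zeroBox d xstar)) (n : ℕ) :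
    MonotoneOn (tailSup fn n) (zeroBox d xstar) := fun _ hz _ hw hzw i =>
  ciSup_le fun k => (hfnmono k hz hw hzw i).trans (le_tailSup hconv hw k.2 i)

lemma dist_tailSup_le
    (hfnne : ∀ n, ∀ x ∈ zeroBox d xstar, ∀ y ∈ zeroBox d xstar, dist (fn n x) (fn n y) ≤ dist x y)
    (n : ℕ) {z w : Fin d → ℝ} (hz : z ∈ zeroBox d xstar) (hw : w ∈ zeroBox d xstar) :
    dist (tailSup fn n z) (tailSup fn n w) ≤ dist z w :=
  (dist_pi_le_iff dist_nonneg).2 fun i => Real.dist_ciSup_ciSup_le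
    ((bddAbove_range_apply hconv hz i).range_tail n)
    ((bddAbove_range_apply hconv hw i).range_tail n)
    fun k => (dist_le_pi_dist _ _ i).trans (hfnne k z hz w hw)

end TailSup

section LeastFixpoint

variable {d : ℕ} {xstar : Fin d → ENNReal}

lemma lfpF_le {F : (Fin d → ENNReal) → Fin d → ENNReal} {x : Fin d → ENNReal} (h : F x ≤ x) :
    lfpF d F ≤ x :=
  sInf_le h

lemma le_lfpF {F : (Fin d → ENNReal) → Fin d → ENNReal} {a : Fin d → ENNReal}
    (h : ∀ x, F x ≤ x → a ≤ x) : a ≤ lfpF d F :=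
  le_sInf h

lemma lfpF_mono {F G : (Fin d → ENNReal) → Fin d → ENNReal} (h : F ≤ G) : lfpF d F ≤ lfpF d G :=
  le_lfpF fun _ hx => lfpF_le ((h _).trans hx)

lemma ofReal_comp_le_extendF {F : (Fin d → ℝ) → Fin d → ℝ} {x : Fin d → ENNReal}
    {y : Fin d → ℝ} (hy : y ∈ zeroBox d xstar) (hyx : ENNReal.ofReal ∘ y ≤ x) :
    ENNReal.ofReal ∘ F y ≤ extendF d xstar F x := fun _ =>
  le_iSup_of_le ⟨y, hy, hyx⟩ le_rfl

lemma extendF_ofReal_comp_le {F : (Fin d → ℝ) → Fin d → ℝ} (hF : MonotoneOn F (zeroBox d xstar))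
    {p : Fin d → ℝ} (hp : p ∈ zeroBox d xstar) :
    extendF d xstar F (ENNReal.ofReal ∘ p) ≤ ENNReal.ofReal ∘ F p := fun i =>
  iSup_le fun y => ENNReal.ofReal_le_ofReal <|
    hF y.2.1 hp (fun j => (ENNReal.ofReal_le_ofReal_iff (hp j).1).1 (y.2.2 j)) i

lemma lfpF_extendF_eq {f : (Fin d → ℝ) → Fin d → ℝ}
    (hmaps : MapsTo f (zeroBox d xstar) (zeroBox d xstar)) (hmono : MonotoneOn f (zeroBox d xstar))
    {mu : Fin d → ℝ} (hmuX : mu ∈ zeroBox d xstar) (hfix : f mu = mu)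
    (hpicard : Tendsto (fun m => f^[m] 0) atTop (𝓝 mu)) :
    lfpF d (extendF d xstar f) = ENNReal.ofReal ∘ mu := by
  refine le_antisymm (lfpF_le ((extendF_ofReal_comp_le hmono hmuX).trans_eq (by rw [hfix])))
    (le_lfpF fun x hx => ?_)
  have hiter : ∀ m, ENNReal.ofReal ∘ f^[m] 0 ≤ x := by
    intro m
    induction m with
    | zero => intro; simp
    | succ m ih =>
      rw [Function.iterate_succ']
      exact (ofReal_comp_le_extendF (hmaps.iterate m zero_mem_zeroBox) ih).trans hx
  have hcont : Continuous fun y : Fin d → ℝ => ENNReal.ofReal ∘ y :=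
    continuous_pi fun i => ENNReal.continuous_ofReal.comp (continuous_apply i)
  exact le_of_tendsto' ((hcont.tendsto mu).comp hpicard) hiter

end LeastFixpoint

section TailOperator

variable {d : ℕ} {xstar : Fin d → ENNReal} {fn : ℕ → (Fin d → ℝ) → Fin d → ℝ}

lemma extendF_le_iSup_extendF_tail {f : (Fin d → ℝ) → Fin d → ℝ}
    (hconv : ∀ x ∈ zeroBox d xstar, Tendsto (fun n => fn n x) atTop (𝓝 (f x))) (n : ℕ) :
    extendF d xstar f ≤ fun x i => ⨆ k : {k : ℕ // n ≤ k}, extendF d xstar (fn k.1) x i := by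
  intro x i
  refine iSup_le fun y => le_of_tendsto
    ((ENNReal.continuous_ofReal.tendsto _).comp (tendsto_pi_nhds.1 (hconv y.1 y.2.1) i))
    (eventually_atTop.2 ⟨n, fun k hk => ?_⟩)
  exact le_iSup_of_le (⟨k, hk⟩ : {k : ℕ // n ≤ k}) (le_iSup_of_le y le_rfl)

lemma lfpF_iSup_extendF_tail_le (hfnmono : ∀ n, MonotoneOn (fn n) (zeroBox d xstar)) {n : ℕ}
    {p : Fin d → ℝ} (hp : p ∈ zeroBox d xstar) (hpre : ∀ k, n ≤ k → fn k p ≤ p) :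
    lfpF d (fun x i => ⨆ k : {k : ℕ // n ≤ k}, extendF d xstar (fn k.1) x i) ≤
      ENNReal.ofReal ∘ p :=
  lfpF_le fun i => iSup_le fun k =>
    (extendF_ofReal_comp_le (hfnmono k) hp i).trans (ENNReal.ofReal_le_ofReal (hpre k k.2 i))

end TailOperator

theorem eventually_exists_tail_prefixpoint_le {d : ℕ} {xstar : Fin d → ENNReal}
    {fn : ℕ → (Fin d → ℝ) → Fin d → ℝ}
    (hfnmaps : ∀ n, MapsTo (fn n) (zeroBox d xstar) (zeroBox d xstar))
    (hfnmono : ∀ n, MonotoneOn (fn n) (zeroBox d xstar))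
    (hfnne : ∀ n, ∀ x ∈ zeroBox d xstar, ∀ y ∈ zeroBox d xstar, dist (fn n x) (fn n y) ≤ dist x y)
    {f : (Fin d → ℝ) → Fin d → ℝ} (hmaps : MapsTo f (zeroBox d xstar) (zeroBox d xstar))
    (hconv : ∀ x ∈ zeroBox d xstar, Tendsto (fun n => fn n x) atTop (𝓝 (f x)))
    {mu : Fin d → ℝ} (hmuX : mu ∈ zeroBox d xstar)
    (hpicard : ∀ x ∈ zeroBox d xstar, Tendsto (fun n => f^[n] x) atTop (𝓝 mu))
    {ε : ℝ} (hε : 0 < ε) :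
    ∀ᶠ n in atTop, ∃ p ∈ zeroBox d xstar, (∀ k, n ≤ k → fn k p ≤ p) ∧ ∀ i, p i ≤ mu i + ε := by
  set v := boxClamp xstar fun i => mu i + ε
  have hv : v ∈ zeroBox d xstar := boxClamp_mem _
  obtain ⟨M, hfM, hM⟩ : ∃ M, dist (f^[M] v) mu ≤ ε / 2 ∧ 0 < M :=
    (((hpicard v hv).eventually (Metric.closedBall_mem_nhds mu (half_pos hε))).and
      (eventually_gt_atTop 0)).exists
  have hclose : ∀ᶠ n in atTop, ∀ j : Fin M,
      dist (tailSup fn n (f^[j] v)) (f (f^[j] v)) ≤ ε / 2 / M :=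
    eventually_all.2 fun j => (tendsto_tailSup hconv (hmaps.iterate j hv)).eventually
      (Metric.closedBall_mem_nhds _ (by positivity))
  filter_upwards [hclose] with n hn
  have hmapsg := mapsTo_tailSup hconv hfnmaps n
  have htrack : dist ((tailSup fn n)^[M] v) (f^[M] v) ≤ ε / 2 :=
    (dist_iterate_le_of_dist_le hmaps hmapsg (fun _ hz _ hw => dist_tailSup_le hconv hfnne n hz hw)
      hv (fun j hj => hn ⟨j, hj⟩) M le_rfl).trans_eq (by field_simp)
  have hgM : (tailSup fn n)^[M] v ≤ v := le_boxClamp (hmapsg.iterate M hv) fun i => by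
    have := (dist_le_pi_dist _ _ i).trans ((dist_triangle _ _ _).trans (add_le_add htrack hfM))
    rw [Real.dist_eq] at this
    linarith [(abs_sub_le_iff.1 this).1]
  obtain ⟨p, hp, hgp, hpv⟩ := exists_prefixpoint_le_of_iterate_le
    (fun _ hx _ hy => inf_mem_zeroBox hx hy) hmapsg (monotoneOn_tailSup hconv hfnmono n) hv hM hgM
  exact ⟨p, hp, fun k hk => (le_tailSup hconv hp hk).trans hgp,
    fun i => (hpv i).trans (boxClamp_le (fun i => add_nonneg (hmuX i).1 hε.le) i)⟩

lemma ENNReal.tendsto_ofReal_of_le_of_eventually_le {α : Type*} {l : Filter α} {u : α → ENNReal}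
    {r : ℝ} (hlow : ∀ x, ENNReal.ofReal r ≤ u x)
    (hup : ∀ ε > 0, ∀ᶠ x in l, u x ≤ ENNReal.ofReal (r + ε)) :
    Tendsto u l (𝓝 (ENNReal.ofReal r)) := by
  refine tendsto_order.2
    ⟨fun b hb => Eventually.of_forall fun x => hb.trans_le (hlow x), fun b hb => ?_⟩
  have hcont : Tendsto (fun ε => ENNReal.ofReal (r + ε)) (𝓝[>] 0) (𝓝 (ENNReal.ofReal r)) := by
    have hc : Continuous fun ε : ℝ => ENNReal.ofReal (r + ε) :=
      ENNReal.continuous_ofReal.comp (continuous_const_add r)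
    exact (hc.tendsto' 0 _ (by simp)).mono_left nhdsWithin_le_nhds
  obtain ⟨ε, hεb, hε⟩ := ((hcont.eventually (gt_mem_nhds hb)).and self_mem_nhdsWithin).exists
  exact (hup ε hε).mono fun x hx => hx.trans_lt hεb

theorem lfp_sup_tail_tendsto_lfp_general (d : ℕ) (xstar : Fin d → ENNReal)
    (fn : ℕ → (Fin d → ℝ) → Fin d → ℝ)
    (hfnmaps : ∀ n, ∀ x ∈ zeroBox d xstar, fn n x ∈ zeroBox d xstar)
    (hfnmono : ∀ n, ∀ x ∈ zeroBox d xstar, ∀ y ∈ zeroBox d xstar, x ≤ y → fn n x ≤ fn n y)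
    (hfnne : ∀ n, ∀ x ∈ zeroBox d xstar, ∀ y ∈ zeroBox d xstar, ‖fn n x - fn n y‖ ≤ ‖x - y‖)
    (f : (Fin d → ℝ) → Fin d → ℝ)
    (hmaps : ∀ x ∈ zeroBox d xstar, f x ∈ zeroBox d xstar)
    (hmono : ∀ x ∈ zeroBox d xstar, ∀ y ∈ zeroBox d xstar, x ≤ y → f x ≤ f y)
    (hconv : ∀ x ∈ zeroBox d xstar, Tendsto (fun n => fn n x) atTop (nhds (f x)))
    (mu : Fin d → ℝ) (hmuX : mu ∈ zeroBox d xstar) (hfix : f mu = mu)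
    (hpicard : ∀ x ∈ zeroBox d xstar, Tendsto (fun n => f^[n] x) atTop (nhds mu)) :
    Tendsto
      (fun n => lfpF d (fun x i => ⨆ k : {k : ℕ // n ≤ k}, extendF d xstar (fn k.1) x i))
      atTop (nhds (lfpF d (extendF d xstar f))) := by
  have hlfp := lfpF_extendF_eq hmaps hmono hmuX hfix (hpicard 0 zero_mem_zeroBox)
  have hfnne_dist : ∀ n, ∀ x ∈ zeroBox d xstar, ∀ y ∈ zeroBox d xstar,
      dist (fn n x) (fn n y) ≤ dist x y := by
    simpa only [dist_eq_norm] using hfnne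
  rw [hlfp, tendsto_pi_nhds]
  refine fun i => ENNReal.tendsto_ofReal_of_le_of_eventually_le (fun n => ?_) fun ε hε => ?_
  · exact (congrFun hlfp i).symm.trans_le (lfpF_mono (extendF_le_iSup_extendF_tail hconv n) i)
  · filter_upwards [eventually_exists_tail_prefixpoint_le hfnmaps hfnmono hfnne_dist hmaps hconv hmuX
      hpicard hε] with n ⟨p, hp, hpre, hpμ⟩
    exact (lfpF_iSup_extendF_tail_le hfnmono hp hpre i).trans (ENNReal.ofReal_le_ofReal (hpμ i))

/-- If `(f_n)` are monotone non-expansive maps on a 0-box `X` converging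
pointwise to a Picard operator `f`, then `μ(sup_{k ≥ n} f_k) → μf`. -/
theorem lfp_sup_tail_tendsto_lfp (d : ℕ) (xstar : Fin d → ENNReal)
    (fn : ℕ → (Fin d → ℝ) → Fin d → ℝ)
    (hfnmaps : ∀ n, ∀ x ∈ zeroBox d xstar, fn n x ∈ zeroBox d xstar)
    (hfnmono : ∀ n, ∀ x ∈ zeroBox d xstar, ∀ y ∈ zeroBox d xstar, x ≤ y → fn n x ≤ fn n y)
    (hfnne : ∀ n, ∀ x ∈ zeroBox d xstar, ∀ y ∈ zeroBox d xstar, ‖fn n x - fn n y‖ ≤ ‖x - y‖)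
    (f : (Fin d → ℝ) → Fin d → ℝ)
    (hmaps : ∀ x ∈ zeroBox d xstar, f x ∈ zeroBox d xstar)
    (hmono : ∀ x ∈ zeroBox d xstar, ∀ y ∈ zeroBox d xstar, x ≤ y → f x ≤ f y)
    (hne : ∀ x ∈ zeroBox d xstar, ∀ y ∈ zeroBox d xstar, ‖f x - f y‖ ≤ ‖x - y‖)
    (hconv : ∀ x ∈ zeroBox d xstar, Tendsto (fun n => fn n x) atTop (nhds (f x)))
    (mu : Fin d → ℝ) (hmuX : mu ∈ zeroBox d xstar) (hfix : f mu = mu)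
    (huniq : ∀ y ∈ zeroBox d xstar, f y = y → y = mu)
    (hpicard : ∀ x ∈ zeroBox d xstar, Tendsto (fun n => f^[n] x) atTop (nhds mu)) :
    Tendsto
      (fun n => lfpF d (fun x i => ⨆ k : {k : ℕ // n ≤ k}, extendF d xstar (fn k.1) x i))
      atTop (nhds (lfpF d (extendF d xstar f))) :=
  lfp_sup_tail_tendsto_lfp_general d xstar fn hfnmaps hfnmono hfnne f hmaps hmono hconv mu hmuX hfix
    hpicard
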